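/- arXiv:1906.12224 — 3 statements merged into one kernel-verified Lean document; each statement's English description precedes it below -/
import Mathlib

section
/- For any tetrahedron, four times the sum of the squared areas of the three medial parallelograms equals the sum of the squared areas of the four faces: 4(L² + M² + N²) = Δ₀² + Δ₁² + Δ₂² + Δ₃². -/
open RealInnerProductSpace
noncomputable def cross3 (u v : EuclideanSpace ℝ (Fin 3)) : EuclideanSpace ℝ (Fin 3) :=
  (WithLp.equiv 2 (Fin 3 → ℝ)).symm
    ![u 1 * v 2 - u 2 * v 1, u 2 * v 0 - u 0 * v 2, u 0 * v 1 - u 1 * v 0]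

lemma cross3_normsq (u v : EuclideanSpace ℝ (Fin 3)) :
    ‖cross3 u v‖^2 = (u 1 * v 2 - u 2 * v 1)^2 + (u 2 * v 0 - u 0 * v 2)^2
      + (u 0 * v 1 - u 1 * v 0)^2 := by
  rw [EuclideanSpace.norm_eq, Real.sq_sqrt (by positivity)]
  simp [cross3, Fin.sum_univ_three, sq_abs]

theorem sum_sq_medial_areas (O A B C : EuclideanSpace ℝ (Fin 3))
    (h : AffineIndependent ℝ ![O, A, B, C]) (Δ₀ Δ₁ Δ₂ Δ₃ L M N : ℝ)
    (hΔ₀ : Δ₀ = ‖cross3 (B - A) (C - A)‖ / 2)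
    (hΔ₁ : Δ₁ = ‖cross3 (B - O) (C - O)‖ / 2)
    (hΔ₂ : Δ₂ = ‖cross3 (C - O) (A - O)‖ / 2)
    (hΔ₃ : Δ₃ = ‖cross3 (A - O) (B - O)‖ / 2)
    (hL : L = ‖cross3 (A - O) (C - B)‖ / 4)
    (hM : M = ‖cross3 (B - O) (A - C)‖ / 4)
    (hN : N = ‖cross3 (C - O) (B - A)‖ / 4) :
    4 * (L^2 + M^2 + N^2) = Δ₀^2 + Δ₁^2 + Δ₂^2 + Δ₃^2 := by
  subst hΔ₀ hΔ₁ hΔ₂ hΔ₃ hL hM hN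
  simp only [div_pow]
  rw [cross3_normsq, cross3_normsq, cross3_normsq, cross3_normsq, cross3_normsq,
    cross3_normsq, cross3_normsq]
  simp only [PiLp.sub_apply]
  ring
end

section
/- For a tetrahedron, the squared area of the pseudoface P (four times the squared medial parallelogram area 4L² for the edge pair (OA, BC)) satisfies the 'law of cosines': 4L² = Δ₀² + Δ₁² − 2Δ₀Δ₁ cos X, where X is the dihedral angle along the edge BC between faces ABC and OBC. -/
open RealInnerProductSpace

lemma cross3_swap (u v : EuclideanSpace ℝ (Fin 3)) : cross3 v u = -cross3 u v := by
  ext i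
  fin_cases i <;> simp [cross3] <;> ring

lemma cross3_key (O A B C : EuclideanSpace ℝ (Fin 3)) :
    cross3 (A - O) (C - B) = cross3 (B - O) (C - O) - cross3 (B - A) (C - A) := by
  ext i
  fin_cases i <;> simp [cross3] <;> ring

theorem pseudoface_law_of_cosines (O A B C : EuclideanSpace ℝ (Fin 3))
    (h : AffineIndependent ℝ ![O, A, B, C]) (Δ₀ Δ₁ L X : ℝ)
    (hΔ₀ : Δ₀ = ‖cross3 (B - A) (C - A)‖ / 2)
    (hΔ₁ : Δ₁ = ‖cross3 (B - O) (C - O)‖ / 2)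
    (hL : L = ‖cross3 (A - O) (C - B)‖ / 4)
    (hX : Real.cos X =
      -(⟪cross3 (B - A) (C - A), cross3 (C - O) (B - O)⟫ /
        (‖cross3 (B - A) (C - A)‖ * ‖cross3 (C - O) (B - O)‖))) :
    4 * L^2 = Δ₀^2 + Δ₁^2 - 2 * Δ₀ * Δ₁ * Real.cos X := by
  set n₀ := cross3 (B - A) (C - A) with hn₀
  set n₁ := cross3 (B - O) (C - O) with hn₁
  have hm : cross3 (C - O) (B - O) = -n₁ := cross3_swap _ _
  have hcos : 2 * Δ₀ * Δ₁ * Real.cos X = ⟪n₀, n₁⟫ / 2 := by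
    rw [hX, hΔ₀, hΔ₁, hm, norm_neg, inner_neg_right]
    by_cases h0 : ‖n₀‖ = 0
    · have hz : n₀ = 0 := norm_eq_zero.mp h0
      simp [h0, hz]
    by_cases h1 : ‖n₁‖ = 0
    · have hz : n₁ = 0 := norm_eq_zero.mp h1
      simp [h1, hz]
    field_simp
  rw [hL, cross3_key, hcos, hΔ₀, hΔ₁]
  have hns : ‖n₁ - n₀‖ ^ 2 = ‖n₁‖ ^ 2 - 2 * ⟪n₁, n₀⟫ + ‖n₀‖ ^ 2 := norm_sub_sq_real n₁ n₀
  have hic : ⟪n₁, n₀⟫ = ⟪n₀, n₁⟫ := real_inner_comm _ _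
  nlinarith [hns, hic]
end

section
/- The cosine of the dihedral angle A of a tetrahedron along edge OA is determined by the areas via cos A = (Δ₂² + Δ₃² − 4L²)/(2Δ₂Δ₃), where L is the area of the medial parallelogram for the edge pair (OA, BC). -/
/-!
Bilinearity and anticommutativity of the cross product give
`(A - O) × (C - B) = -(n₂ + n₃)`, so `4L = ‖n₂ + n₃‖` and `2Δ₂`, `2Δ₃` are `‖n₂‖`, `‖n₃‖`.
The formula is then the law of cosines for the angle between `n₂` and `-n₃`.
-/

open RealInnerProductSpace

lemma cross3_sub_right (u v w : EuclideanSpace ℝ (Fin 3)) :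
    cross3 u (v - w) = cross3 u v - cross3 u w := by
  ext i
  fin_cases i <;> simp [cross3] <;> ring

lemma cross3_anticomm (u v : EuclideanSpace ℝ (Fin 3)) :
    cross3 u v = -cross3 v u := by
  ext i
  fin_cases i <;> simp [cross3] <;> ring

lemma cross3_sub_sub_eq_neg_add (O A B C : EuclideanSpace ℝ (Fin 3)) :
    cross3 (A - O) (C - B) = -(cross3 (C - O) (A - O) + cross3 (A - O) (B - O)) := by
  rw [← sub_sub_sub_cancel_right C B O, cross3_sub_right, cross3_anticomm (A - O) (C - O)]
  abel

lemma neg_inner_div_norm_mul_norm_eq {E : Type*} [NormedAddCommGroup E] [InnerProductSpace ℝ E]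
    (u v : E) :
    -(⟪u, v⟫ / (‖u‖ * ‖v‖)) = (‖u‖ ^ 2 + ‖v‖ ^ 2 - ‖u + v‖ ^ 2) / (2 * ‖u‖ * ‖v‖) := by
  rw [norm_add_sq_real]
  ring

theorem cos_dihedral_from_areas_general (O A B C : EuclideanSpace ℝ (Fin 3))
    (Δ₂ Δ₃ L dihA : ℝ)
    (hΔ₂ : Δ₂ = ‖cross3 (C - O) (A - O)‖ / 2)
    (hΔ₃ : Δ₃ = ‖cross3 (A - O) (B - O)‖ / 2)
    (hL : L = ‖cross3 (A - O) (C - B)‖ / 4)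
    (hA : Real.cos dihA =
      -(⟪cross3 (C - O) (A - O), cross3 (A - O) (B - O)⟫ /
        (‖cross3 (C - O) (A - O)‖ * ‖cross3 (A - O) (B - O)‖))) :
    Real.cos dihA = (Δ₂^2 + Δ₃^2 - 4 * L^2) / (2 * Δ₂ * Δ₃) := by
  rw [hA, neg_inner_div_norm_mul_norm_eq, hΔ₂, hΔ₃, hL, cross3_sub_sub_eq_neg_add O A B C, norm_neg]
  ring

theorem cos_dihedral_from_areas (O A B C : EuclideanSpace ℝ (Fin 3))
    (h : AffineIndependent ℝ ![O, A, B, C]) (Δ₂ Δ₃ L dihA : ℝ)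
    (hΔ₂ : Δ₂ = ‖cross3 (C - O) (A - O)‖ / 2)
    (hΔ₃ : Δ₃ = ‖cross3 (A - O) (B - O)‖ / 2)
    (hL : L = ‖cross3 (A - O) (C - B)‖ / 4)
    (hA : Real.cos dihA =
      -(⟪cross3 (C - O) (A - O), cross3 (A - O) (B - O)⟫ /
        (‖cross3 (C - O) (A - O)‖ * ‖cross3 (A - O) (B - O)‖))) :
    Real.cos dihA = (Δ₂^2 + Δ₃^2 - 4 * L^2) / (2 * Δ₂ * Δ₃) :=
  cos_dihedral_from_areas_general O A B C Δ₂ Δ₃ L dihA hΔ₂ hΔ₃ hL hA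
end
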